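/- Let q be a prime power, n ≥ 1, and H a non-degenerate Hermitian form on (F_{q^2})^n. Then the number of vectors t ∈ (F_{q^2})^n with H(t) = 0 equals q^{2n-1} − (q−1)(−q)^{n-1}. -/

import Mathlib

/-!
Since `σ : x ↦ x ^ q` is not the identity on `F_{q²}`, polarization gives a vector `v` with
`H v ≠ 0`. Then `V = F v ⊕ W` with `W = v^⊥`, and `H (x v + w) = x^(q+1) H v + H w`. The norm
`x ↦ x^(q+1)` takes the value `0` once and every value in `F_q^×` exactly `q + 1` times, so
`#{H = 0 on V} = (q+1) |W| - q #{H = 0 on W}`, and induction on the dimension gives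
`q #{H = 0} = q^(2n) + (q-1)(-q)^n`.
-/

open Polynomial

namespace FiniteField

variable {F : Type*} [Field F] [Fintype F] {q : ℕ}

theorem exists_isPrimitiveRoot_card_sub_one :
    ∃ g : F, IsPrimitiveRoot g (Fintype.card F - 1) := by
  classical
  obtain ⟨g, hg⟩ := IsCyclic.exists_ofOrder_eq_natCard (α := Fˣ)
  refine ⟨g, ?_⟩
  rw [← Fintype.card_units, ← Nat.card_eq_fintype_card, ← hg]
  exact IsPrimitiveRoot.coe_units_iff.mpr (IsPrimitiveRoot.orderOf g)

theorem one_lt_of_card_eq_sq (hF : Fintype.card F = q ^ 2) : 1 < q := by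
  have := hF ▸ Fintype.one_lt_card (α := F)
  by_contra! h
  interval_cases q <;> simp at this

theorem exists_isPrimitiveRoot_of_card_eq_sq (hF : Fintype.card F = q ^ 2) :
    ∃ g : F, IsPrimitiveRoot g ((q + 1) * (q - 1)) := by
  simpa [hF, ← Nat.sq_sub_sq] using exists_isPrimitiveRoot_card_sub_one (F := F)

theorem exists_ringHom_eq_pow_of_card_eq_sq (hF : Fintype.card F = q ^ 2) :
    ∃ σ : F →+* F, ∀ x, σ x = x ^ q := by
  obtain ⟨n, hp, hn⟩ := FiniteField.card F (ringChar F)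
  obtain ⟨k, -, rfl⟩ := (Nat.dvd_prime_pow hp).mp (hn ▸ hF ▸ dvd_pow_self q two_ne_zero)
  have := Fact.mk hp
  exact ⟨iterateFrobenius F (ringChar F) k, iterateFrobenius_def _ k⟩

theorem exists_pow_ne_self_of_card_eq_sq (hF : Fintype.card F = q ^ 2) :
    ∃ x : F, x ^ q ≠ x := by
  obtain ⟨m, rfl⟩ : ∃ m, q = m + 2 := ⟨q - 2, by have := one_lt_of_card_eq_sq hF; omega⟩
  obtain ⟨g, hg⟩ := exists_isPrimitiveRoot_of_card_eq_sq hF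
  refine ⟨g, fun h => ?_⟩
  have := hg.pow_inj (by simp; nlinarith) (by simp; nlinarith) (h.trans (pow_one g).symm)
  omega

theorem card_pow_succ_eq_of_pow_eq_self [DecidableEq F] (hF : Fintype.card F = q ^ 2) {d : F}
    (hd : d ^ q = d) : Nat.card {x : F // x ^ (q + 1) = d} = if d = 0 then 1 else q + 1 := by
  split_ifs with hd0
  · subst hd0
    simp
  have hq := one_lt_of_card_eq_sq hF
  have : NeZero (q - 1) := ⟨by omega⟩
  obtain ⟨g, hg⟩ := exists_isPrimitiveRoot_of_card_eq_sq hF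
  have hpos : 0 < (q + 1) * (q - 1) := Nat.mul_pos q.succ_pos (by omega)
  have hd1 : d ^ (q - 1) = 1 := by
    refine mul_right_cancel₀ hd0 ?_
    rw [← pow_succ, Nat.sub_add_cancel hq.le, hd, one_mul]
  -- `g ^ (q + 1)` generates the `(q - 1)`-th roots of unity, so `d` is a `(q + 1)`-th power.
  obtain ⟨i, -, hi⟩ := (hg.pow hpos rfl).eq_pow_of_pow_eq_one hd1
  have hroot : (g ^ i) ^ (q + 1) = d := by rw [← pow_mul, mul_comm, pow_mul, hi]
  have hζ : IsPrimitiveRoot (g ^ (q - 1)) (q + 1) := hg.pow hpos (mul_comm _ _)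
  rw [Nat.card_congr (Equiv.subtypeEquivRight fun x => (mem_nthRootsFinset q.succ_pos d).symm),
    Nat.card_eq_finsetCard, nthRootsFinset_def, Multiset.toFinset_card_of_nodup
      (hζ.nthRoots_nodup hd0), hζ.card_nthRoots, if_pos ⟨_, hroot⟩]

end FiniteField

namespace LinearMap

variable {K V : Type*} [Field K] [AddCommGroup V] [Module K V]

def kerProdEquiv (f : V →ₗ[K] K) {v : V} (hv : f v ≠ 0) : ker f × K ≃ V where
  toFun p := p.2 • v + p.1
  invFun t := (⟨t - (f t / f v) • v, by simp [hv]⟩, f t / f v)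
  left_inv := by
    rintro ⟨⟨w, hw : f w = 0⟩, x⟩
    ext <;> simp [hw, hv]
  right_inv t := by simp

variable {σ : K →+* K} {B : V →ₗ[K] V →ₛₗ[σ] K}

theorem exists_apply_self_ne_zero [Nontrivial V] (hB : B.SeparatingLeft) {l : K}
    (hl : σ l ≠ l) : ∃ v, B v v ≠ 0 := by
  by_contra! h
  obtain ⟨u, hu⟩ := exists_ne (0 : V)
  refine hu (hB u fun w => ?_)
  have h₁ : B u w + B w u = 0 := by simpa [h] using h (u + w)
  have h₂ : σ l * B u w + l * B w u = 0 := by simpa [h] using h (u + l • w)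
  have : (σ l - l) * B u w = 0 := by linear_combination h₂ - l * h₁
  exact (mul_eq_zero.mp this).resolve_left (sub_ne_zero.mpr hl)

theorem apply_kerProdEquiv_self (hB : ∀ u w, σ (B u w) = B w u) {v : V} (hv : B v v ≠ 0)
    (p : ker (B.flip v) × K) :
    B ((B.flip v).kerProdEquiv hv p) ((B.flip v).kerProdEquiv hv p) =
      p.2 * σ p.2 * B v v + B p.1 p.1 := by
  obtain ⟨⟨w, hw : B w v = 0⟩, x⟩ := p
  have hw' : B v w = 0 := by rw [← hB, hw, map_zero]
  show B (x • v + w) (x • v + w) = _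
  simp [hw, hw']
  ring

theorem separatingLeft_domRestrict_ker_flip (hB : B.SeparatingLeft) {v : V} (hv : B v v ≠ 0) :
    (B.domRestrict₁₂ (ker (B.flip v)) (ker (B.flip v))).SeparatingLeft := by
  rintro ⟨w, hw : B w v = 0⟩ h
  refine Subtype.ext (hB w fun t => ?_)
  obtain ⟨⟨⟨u, hu⟩, x⟩, rfl⟩ := ((B.flip v).kerProdEquiv hv).surjective t
  show B w (x • v + u) = 0
  have hwu : B w u = 0 := h ⟨u, hu⟩
  simp [hw, hwu]

end LinearMap

namespace Matrix

variable {K ι : Type*} [Field K] [Fintype ι] [DecidableEq ι] {σ : K →+* K}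

theorem map_toLinearMapₛₗ₂'_eq_swap {a : Matrix ι ι K} (hσ : ∀ x, σ (σ x) = x)
    (ha : ∀ i j, a j i = σ (a i j)) (u w : ι → K) :
    σ (toLinearMapₛₗ₂' K (RingHom.id K) σ a u w) = toLinearMapₛₗ₂' K (RingHom.id K) σ a w u := by
  simp only [toLinearMapₛₗ₂'_apply, map_sum, smul_eq_mul, map_mul, hσ, RingHom.id_apply]
  rw [Finset.sum_comm]
  refine Finset.sum_congr rfl fun i _ => Finset.sum_congr rfl fun j _ => ?_
  rw [ha, hσ]
  ring

theorem separatingLeft_toLinearMapₛₗ₂' {a : Matrix ι ι K} (ha : IsUnit a) :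
    (toLinearMapₛₗ₂' K (RingHom.id K) σ a).SeparatingLeft := by
  intro u hu
  refine eq_zero_of_vecMul_eq_zero ((isUnit_iff_isUnit_det a).mp ha).ne_zero ?_
  ext j
  simpa [toLinearMapₛₗ₂'_apply, vecMul, dotProduct, Pi.single_apply, mul_comm]
    using hu (Pi.single j 1)

end Matrix

section Isotropic

variable {F V : Type*} [Field F] [Fintype F] [AddCommGroup V] [Module F V] [Finite V]
  {q : ℕ} {σ : F →+* F} {B : V →ₗ[F] V →ₛₗ[σ] F}

theorem card_isotropic_eq_of_apply_self_ne_zero (hF : Fintype.card F = q ^ 2)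
    (hσ : ∀ x, σ x = x ^ q) (hB : ∀ u w, σ (B u w) = B w u) {v : V} (hv : B v v ≠ 0) :
    (Nat.card {t : V // B t t = 0} : ℤ) =
      (q + 1) * Nat.card (LinearMap.ker (B.flip v)) -
        q * Nat.card {w : LinearMap.ker (B.flip v) // B w w = 0} := by
  classical
  set W := LinearMap.ker (B.flip v)
  have : Fintype W := Fintype.ofFinite W
  have hfiber (w : W) : (Nat.card {x : F // x ^ (q + 1) = -B w w / B v v} : ℤ) =
      q + 1 - q * if B w w = 0 then 1 else 0 := by
    have hd : (-B w w / B v v) ^ q = -B w w / B v v := by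
      rw [← hσ, map_div₀, map_neg, hB, hB]
    rw [FiniteField.card_pow_succ_eq_of_pow_eq_self hF hd]
    split_ifs <;> simp_all
  have hcount : Nat.card {t : V // B t t = 0} =
      ∑ w : W, Nat.card {x : F // x ^ (q + 1) = -B w w / B v v} := by
    rw [← Nat.card_sigma, ← Nat.card_congr (Equiv.subtypeProdEquivSigmaSubtype
      fun (w : W) (x : F) => x ^ (q + 1) = -B w w / B v v)]
    refine (Nat.card_congr (((B.flip v).kerProdEquiv hv).subtypeEquiv fun p => ?_)).symm
    rw [LinearMap.apply_kerProdEquiv_self hB hv, pow_succ', ← hσ, eq_div_iff hv,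
      eq_neg_iff_add_eq_zero]
  rw [hcount, Nat.cast_sum]
  simp_rw [hfiber]
  rw [Finset.sum_sub_distrib, ← Finset.mul_sum, Finset.sum_boole]
  simp [Nat.card_eq_fintype_card, Fintype.card_subtype, mul_comm]

-- Multiplied by `q` so that the formula also covers dimension `0`.
theorem mul_card_isotropic_eq (hF : Fintype.card F = q ^ 2) (hσ : ∀ x, σ x = x ^ q) (n : ℕ)
    (hV : Nat.card V = q ^ (2 * n)) (hB : ∀ u w, σ (B u w) = B w u) (hBs : B.SeparatingLeft) :
    (q : ℤ) * Nat.card {t : V // B t t = 0} = q ^ (2 * n) + (q - 1) * (-q) ^ n := by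
  induction n generalizing V with
  | zero =>
    have : Subsingleton V := (Nat.card_eq_one_iff_unique.mp hV).1
    have : Nat.card {t : V // B t t = 0} = 1 :=
      Nat.card_eq_one_iff_unique.mpr ⟨inferInstance, ⟨⟨0, by simp⟩⟩⟩
    simp [this]
  | succ n ih =>
    have hq := FiniteField.one_lt_of_card_eq_sq hF
    have : Nontrivial V :=
      Finite.one_lt_card_iff_nontrivial.mp (hV ▸ Nat.one_lt_pow (by omega) hq)
    obtain ⟨l, hl⟩ := FiniteField.exists_pow_ne_self_of_card_eq_sq hF
    obtain ⟨v, hv⟩ := B.exists_apply_self_ne_zero hBs (l := l) (by rwa [hσ])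
    set W := LinearMap.ker (B.flip v)
    have hW : Nat.card W = q ^ (2 * n) := by
      have h := Nat.card_congr ((B.flip v).kerProdEquiv hv)
      rw [Nat.card_prod, hV, Nat.card_eq_fintype_card (α := F), hF, mul_add, pow_add,
        mul_one] at h
      exact Nat.eq_of_mul_eq_mul_right (pow_pos (by omega : 0 < q) 2) h
    have ihW : (q : ℤ) * Nat.card {w : W // B w w = 0} = q ^ (2 * n) + (q - 1) * (-q) ^ n :=
      ih (B := B.domRestrict₁₂ W W) hW (fun u w => hB u w)
        (B.separatingLeft_domRestrict_ker_flip hBs hv)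
    have hWZ : (Nat.card W : ℤ) = q ^ (2 * n) := by exact_mod_cast hW
    rw [card_isotropic_eq_of_apply_self_ne_zero hF hσ hB hv]
    linear_combination (-(q : ℤ)) * ihW + (q * (q + 1) : ℤ) * hWZ

end Isotropic

theorem stmt1_general (q n : ℕ) (hn : 1 ≤ n)
    (F : Type) [Field F] [Fintype F] (hF : Fintype.card F = q ^ 2)
    (a : Matrix (Fin n) (Fin n) F) (ha : IsUnit a)
    (herm : ∀ i j, a j i = (a i j) ^ q)
    (H : (Fin n → F) → F)
    (hH : ∀ t, H t = ∑ i, ∑ j, a i j * t i * (t j) ^ q) :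
    (Nat.card {t : Fin n → F // H t = 0} : ℤ) =
      (q : ℤ) ^ (2 * n - 1) - ((q : ℤ) - 1) * (-(q : ℤ)) ^ (n - 1) := by
  obtain ⟨σ, hσ⟩ := FiniteField.exists_ringHom_eq_pow_of_card_eq_sq hF
  have hσσ (x : F) : σ (σ x) = x := by rw [hσ, hσ, ← pow_mul, ← sq, ← hF, FiniteField.pow_card]
  set B := Matrix.toLinearMapₛₗ₂' F (RingHom.id F) σ a
  have hHB (t : Fin n → F) : H t = B t t := by
    simp only [hH, B, Matrix.toLinearMapₛₗ₂'_apply, hσ, RingHom.id_apply, smul_eq_mul]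
    exact Finset.sum_congr rfl fun i _ => Finset.sum_congr rfl fun j _ => by ring
  have hV : Nat.card (Fin n → F) = q ^ (2 * n) := by
    simp [Nat.card_eq_fintype_card, hF, ← pow_mul]
  have key := mul_card_isotropic_eq hF hσ n hV
    (Matrix.map_toLinearMapₛₗ₂'_eq_swap hσσ fun i j => (herm i j).trans (hσ _).symm)
    (Matrix.separatingLeft_toLinearMapₛₗ₂' ha)
  rw [Nat.card_congr (Equiv.subtypeEquivRight fun t => by rw [hHB t])]
  obtain ⟨m, rfl⟩ : ∃ m, n = m + 1 := ⟨n - 1, by omega⟩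
  have hq : (q : ℤ) ≠ 0 := by have := FiniteField.one_lt_of_card_eq_sq hF; omega
  refine mul_left_cancel₀ hq ?_
  rw [key, show 2 * (m + 1) - 1 = 2 * m + 1 by omega, Nat.add_sub_cancel]
  ring

/-- For a non-degenerate Hermitian form `H` on `(F_{q^2})^n` (`q` a prime power, `n ≥ 1`),
the number of vectors `t` with `H t = 0` is `q^(2n-1) - (q-1)(-q)^(n-1)`. -/
theorem stmt1 (q n : ℕ) (hq : IsPrimePow q) (hn : 1 ≤ n)
    (F : Type) [Field F] [Fintype F] (hF : Fintype.card F = q ^ 2)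
    (a : Matrix (Fin n) (Fin n) F) (ha : IsUnit a)
    (herm : ∀ i j, a j i = (a i j) ^ q)
    (H : (Fin n → F) → F)
    (hH : ∀ t, H t = ∑ i, ∑ j, a i j * t i * (t j) ^ q) :
    (Nat.card {t : Fin n → F // H t = 0} : ℤ) =
      (q : ℤ) ^ (2 * n - 1) - ((q : ℤ) - 1) * (-(q : ℤ)) ^ (n - 1) :=
  stmt1_general q n hn F hF a ha herm H hH
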